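/- Let k ∈ ℝ, let w_A, w_B : ℝ → ℂ be C^∞ functions with w_A(x) + w_B(x) = x + k for all x, let s_A, s_B be antiderivatives of w_A, w_B with s_A(x) + s_B(x) = x²/2 + kx, and set φ₀(x) = N_φ e^{−s_A(x)}, Ψ₀(x) = N_Ψ e^{−conj(s_B(x))}, φ_n = (1/√(n!)) Bⁿ φ₀, Ψ_n = (1/√(n!)) (A†)ⁿ Ψ₀, where (Af)(x) = f'(x) + w_A(x) f(x), (Bf)(x) = −f'(x) + w_B(x) f(x), (A†f)(x) = −f'(x) + conj(w_A(x)) f(x), (B†f)(x) = f'(x) + conj(w_B(x)) f(x). Then for every n ≥ 0 the eigenvalue equations (B(Aφ_n))(x) = n·φ_n(x) and (A†(B†Ψ_n))(x) = n·Ψ_n(x) hold for all x ∈ ℝ; i.e. φ_n is an eigenfunction of the number-like operator N = BA with eigenvalue n, and Ψ_n is an eigenfunction of N† = A†B† with eigenvalue n. -/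

import Mathlib

noncomputable section

/-- The pseudo-bosonic lowering operator `A = d/dx + w_A`. -/
def opA (wA : ℝ → ℂ) (f : ℝ → ℂ) : ℝ → ℂ :=
  fun x => deriv f x + wA x * f x

/-- The pseudo-bosonic raising operator `B = -d/dx + w_B`. -/
def opB (wB : ℝ → ℂ) (f : ℝ → ℂ) : ℝ → ℂ :=
  fun x => -deriv f x + wB x * f x

/-- The pseudo-bosonic raising operator `A† = -d/dx + conj w_A`. -/
def opAdag (wA : ℝ → ℂ) (f : ℝ → ℂ) : ℝ → ℂ :=
  fun x => -deriv f x + (starRingEnd ℂ) (wA x) * f x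

/-- The pseudo-bosonic lowering operator `B† = d/dx + conj w_B`. -/
def opBdag (wB : ℝ → ℂ) (f : ℝ → ℂ) : ℝ → ℂ :=
  fun x => deriv f x + (starRingEnd ℂ) (wB x) * f x

/-- `φ_n = (1/√n!) Bⁿ φ₀` with `φ₀ = N_φ e^{-s_A}`. -/
def pbPhi (wB sA : ℝ → ℂ) (Nφ : ℂ) (n : ℕ) : ℝ → ℂ :=
  fun x => (1 / (Real.sqrt n.factorial : ℂ)) *
    ((opB wB)^[n] (fun t => Nφ * Complex.exp (-sA t)) x)

/-- `Ψ_n = (1/√n!) (A†)ⁿ Ψ₀` with `Ψ₀ = N_Ψ e^{-conj s_B}`. -/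
def pbPsi (wA sB : ℝ → ℂ) (NΨ : ℂ) (n : ℕ) : ℝ → ℂ :=
  fun x => (1 / (Real.sqrt n.factorial : ℂ)) *
    ((opAdag wA)^[n] (fun t => NΨ * Complex.exp (-(starRingEnd ℂ) (sB t))) x)

local notation "S∞" => ((⊤:ℕ∞) : WithTop ℕ∞)

lemma opA_smooth {w f : ℝ → ℂ} (hw : ContDiff ℝ S∞ w) (hf : ContDiff ℝ S∞ f) :
    ContDiff ℝ S∞ (opA w f) :=
  (contDiff_infty_iff_deriv.mp hf).2.add (hw.mul hf)

lemma opB_smooth {w f : ℝ → ℂ} (hw : ContDiff ℝ S∞ w) (hf : ContDiff ℝ S∞ f) :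
    ContDiff ℝ S∞ (opB w f) :=
  (contDiff_infty_iff_deriv.mp hf).2.neg.add (hw.mul hf)

/-- The commutation relation `[A, B] = 1` (pointwise, on smooth functions). -/
lemma comm_AB {wA wB : ℝ → ℂ} (hwA : ContDiff ℝ S∞ wA) (hwB : ContDiff ℝ S∞ wB)
    (hone : ∀ x, deriv wA x + deriv wB x = 1)
    {f : ℝ → ℂ} (hf : ContDiff ℝ S∞ f) (x : ℝ) :
    opA wA (opB wB f) x = opB wB (opA wA f) x + f x := by
  have hfd : Differentiable ℝ f := hf.differentiable (by simp)
  have hf' : ContDiff ℝ S∞ (deriv f) := (contDiff_infty_iff_deriv.mp hf).2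
  have hf'd : Differentiable ℝ (deriv f) := hf'.differentiable (by simp)
  have hAd : Differentiable ℝ wA := hwA.differentiable (by simp)
  have hBd : Differentiable ℝ wB := hwB.differentiable (by simp)
  have d1 : deriv (opB wB f) x
      = -(deriv (deriv f) x) + (deriv wB x * f x + wB x * deriv f x) :=
    (((hf'd x).hasDerivAt.neg).add (((hBd x).hasDerivAt).mul ((hfd x).hasDerivAt))).deriv
  have d2 : deriv (opA wA f) x
      = deriv (deriv f) x + (deriv wA x * f x + wA x * deriv f x) :=
    (((hf'd x).hasDerivAt).add (((hAd x).hasDerivAt).mul ((hfd x).hasDerivAt))).deriv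
  have e1 : opA wA (opB wB f) x = deriv (opB wB f) x + wA x * opB wB f x := rfl
  have e2 : opB wB (opA wA f) x = -deriv (opA wA f) x + wB x * opA wA f x := rfl
  rw [e1, e2, d1, d2]
  simp only [opA, opB]
  linear_combination (f x) * hone x

lemma opB_const_mul {w h : ℝ → ℂ} (hd : Differentiable ℝ h) (c : ℂ) :
    opB w (fun y => c * h y) = fun y => c * opB w h y := by
  funext x
  simp only [opB, deriv_const_mul c (hd x)]
  ring

/-- Main eigenvalue lemma: `B (A (Bⁿ φ₀)) = n • Bⁿ φ₀` for `φ₀ = N e^{-s}` with `s' = wA`. -/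
lemma mainEig (wA wB sA : ℝ → ℂ) (Nφ : ℂ)
    (hwA : ContDiff ℝ S∞ wA) (hwB : ContDiff ℝ S∞ wB)
    (hone : ∀ x, deriv wA x + deriv wB x = 1)
    (hsA : ∀ x, HasDerivAt sA (wA x) x) :
    ∀ n : ℕ, ContDiff ℝ S∞ ((opB wB)^[n] (fun t => Nφ * Complex.exp (-sA t))) ∧
      ∀ x, opB wB (opA wA ((opB wB)^[n] (fun t => Nφ * Complex.exp (-sA t)))) x
          = (n : ℂ) * (opB wB)^[n] (fun t => Nφ * Complex.exp (-sA t)) x := by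
  set φ₀ : ℝ → ℂ := fun t => Nφ * Complex.exp (-sA t) with hφ₀
  have hsAd : Differentiable ℝ sA := fun x => (hsA x).differentiableAt
  have hsAs : ContDiff ℝ S∞ sA := by
    refine contDiff_infty_iff_deriv.mpr ⟨hsAd, ?_⟩
    have : deriv sA = wA := funext fun x => (hsA x).deriv
    rw [this]; exact hwA
  have hφ₀s : ContDiff ℝ S∞ φ₀ :=
    contDiff_const.mul (Complex.contDiff_exp.comp hsAs.neg)
  intro n
  induction n with
  | zero =>
    refine ⟨hφ₀s, fun x => ?_⟩
    have hA0 : opA wA φ₀ = fun _ => (0:ℂ) := by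
      funext y
      have h : HasDerivAt φ₀ (Nφ * (Complex.exp (-sA y) * -(wA y))) y :=
        (((hsA y).neg).cexp).const_mul Nφ
      rw [show opA wA φ₀ y = deriv φ₀ y + wA y * φ₀ y from rfl, h.deriv]
      simp only [hφ₀]
      ring
    rw [Function.iterate_zero_apply, hA0]
    simp [opB]
  | succ n ih =>
    obtain ⟨hgs, heig⟩ := ih
    set g := (opB wB)^[n] φ₀ with hg
    have hgd : Differentiable ℝ g := hgs.differentiable (by simp)
    have hBg : ContDiff ℝ S∞ (opB wB g) := opB_smooth hwB hgs
    refine ⟨by rw [Function.iterate_succ_apply']; exact hBg, fun x => ?_⟩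
    have h1 : opA wA (opB wB g) = fun y => ((n : ℂ) + 1) * g y := by
      funext y
      rw [comm_AB hwA hwB hone hgs y, heig y]
      ring
    rw [Function.iterate_succ_apply', h1, opB_const_mul hgd ((n : ℂ) + 1)]
    push_cast
    ring

lemma opA_const_mul {w h : ℝ → ℂ} (hd : Differentiable ℝ h) (c : ℂ) :
    opA w (fun y => c * h y) = fun y => c * opA w h y := by
  funext x
  simp only [opA, deriv_const_mul c (hd x)]
  ring

theorem stmt7 (k : ℝ) (wA wB sA sB : ℝ → ℂ) (Nφ NΨ : ℂ)
    (hwA : ContDiff ℝ (⊤ : ℕ∞) wA) (hwB : ContDiff ℝ (⊤ : ℕ∞) wB)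
    (hsum : ∀ x : ℝ, wA x + wB x = (x : ℂ) + (k : ℂ))
    (hsA : ∀ x : ℝ, HasDerivAt sA (wA x) x)
    (hsB : ∀ x : ℝ, HasDerivAt sB (wB x) x)
    (hnorm : ∀ x : ℝ, sA x + sB x = (x : ℂ) ^ 2 / 2 + (k : ℂ) * (x : ℂ))
    (hNφ : Nφ ≠ 0) (hNΨ : NΨ ≠ 0) :
    ∀ (n : ℕ) (x : ℝ),
      opB wB (opA wA (pbPhi wB sA Nφ n)) x = (n : ℂ) * pbPhi wB sA Nφ n x ∧
      opAdag wA (opBdag wB (pbPsi wA sB NΨ n)) x = (n : ℂ) * pbPsi wA sB NΨ n x := by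
  have hwA' : ContDiff ℝ S∞ wA := hwA.of_le (by simp)
  have hwB' : ContDiff ℝ S∞ wB := hwB.of_le (by simp)
  -- derivative of the constraint: wA' + wB' = 1
  have hone : ∀ x, deriv wA x + deriv wB x = 1 := by
    intro x
    have hA := (hwA'.differentiable (by simp) x).hasDerivAt
    have hB := (hwB'.differentiable (by simp) x).hasDerivAt
    have hsum' : (fun x : ℝ => wA x + wB x) = fun x : ℝ => (x : ℂ) + (k : ℂ) :=
      funext hsum
    have h1 : HasDerivAt (fun x : ℝ => (x : ℂ) + (k : ℂ)) 1 x := by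
      simpa using (Complex.ofRealCLM.hasDerivAt (x := x)).add_const (k : ℂ)
    have h2 : HasDerivAt (fun x : ℝ => wA x + wB x) (deriv wA x + deriv wB x) x :=
      hA.add hB
    rw [hsum'] at h2
    exact h2.unique h1
  -- the daggered data
  set cwA : ℝ → ℂ := fun x => (starRingEnd ℂ) (wA x) with hcwA
  set cwB : ℝ → ℂ := fun x => (starRingEnd ℂ) (wB x) with hcwB
  set csB : ℝ → ℂ := fun x => (starRingEnd ℂ) (sB x) with hcsB
  have hcwA' : ContDiff ℝ S∞ cwA := Complex.conjCLE.contDiff.comp hwA'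
  have hcwB' : ContDiff ℝ S∞ cwB := Complex.conjCLE.contDiff.comp hwB'
  have hdcwA : ∀ x, deriv cwA x = (starRingEnd ℂ) (deriv wA x) := fun x =>
    ((hwA'.differentiable (by simp) x).hasDerivAt.star).deriv
  have hdcwB : ∀ x, deriv cwB x = (starRingEnd ℂ) (deriv wB x) := fun x =>
    ((hwB'.differentiable (by simp) x).hasDerivAt.star).deriv
  have honeD : ∀ x, deriv cwB x + deriv cwA x = 1 := by
    intro x
    rw [hdcwA, hdcwB, ← map_add]
    rw [add_comm (deriv wB x), hone x]
    simp
  have hcsB' : ∀ x, HasDerivAt csB (cwB x) x := fun x => (hsB x).star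
  have key1 := mainEig wA wB sA Nφ hwA' hwB' hone hsA
  have key2 := mainEig cwB cwA csB NΨ hcwB' hcwA' honeD hcsB'
  intro n x
  constructor
  · -- φ part
    obtain ⟨hgs, heig⟩ := key1 n
    set g := (opB wB)^[n] (fun t => Nφ * Complex.exp (-sA t)) with hg
    have hgd : Differentiable ℝ g := hgs.differentiable (by simp)
    have hAgd : Differentiable ℝ (opA wA g) :=
      (opA_smooth hwA' hgs).differentiable (by simp)
    have hp : pbPhi wB sA Nφ n = fun y => (1 / (Real.sqrt n.factorial : ℂ)) * g y := rfl
    rw [hp, opA_const_mul hgd, opB_const_mul hAgd]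
    simp only [heig x]
    ring
  · -- Ψ part
    obtain ⟨hgs, heig⟩ := key2 n
    set g := (opB cwA)^[n] (fun t => NΨ * Complex.exp (-csB t)) with hg
    have hgd : Differentiable ℝ g := hgs.differentiable (by simp)
    have hAgd : Differentiable ℝ (opA cwB g) :=
      (opA_smooth hcwB' hgs).differentiable (by simp)
    have hiter : (opAdag wA)^[n] (fun t => NΨ * Complex.exp (-(starRingEnd ℂ) (sB t))) = g := rfl
    have hp : pbPsi wA sB NΨ n = fun y => (1 / (Real.sqrt n.factorial : ℂ)) * g y := by
      funext y; rw [pbPsi, hiter]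
    have hBdag : opBdag wB = opA cwB := rfl
    have hAdag : opAdag wA = opB cwA := rfl
    rw [hp, hBdag, hAdag, opA_const_mul hgd, opB_const_mul hAgd]
    simp only [heig x]
    ring

end
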